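/- If the monotone 3-CNF formula θ is satisfiable, then the gadget graph G_θ has a selective subset of cardinality exactly 2n + m; namely, for a satisfying assignment take {x_{i,1}, x_{i,3}} for each variable x_i assigned true, {x̄_{i,1}, x̄_{i,3}} for each variable assigned false, together with c_{j,1} for every clause c_j. -/
import Mathlib


/-- The set of nearest neighbors of `v` in `U` with respect to hop-distance in `G`:
`N̂(v,U) = {u ∈ U : d(v,u) = min_{w ∈ U} d(v,w)}` (empty if `U` is empty). -/
def NearestSet {V : Type*} (G : SimpleGraph V) (v : V) (U : Set V) : Set V :=
  {u | u ∈ U ∧ ∀ w ∈ U, G.dist v u ≤ G.dist v w}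

/-- `S` is a selective subset of `(G, C)`: every vertex `v` has, among its nearest
neighbors in `S ∪ (V ∖ V_{C v})`, at least one vertex of its own color. -/
def IsSelective {V α : Type*} (G : SimpleGraph V) (C : V → α) (S : Set V) : Prop :=
  ∀ v : V, ∃ u ∈ NearestSet G v (S ∪ {w | C w ≠ C v}), C u = C v

/-- Vertices of the gadget graph `G_θ` for a monotone 3-CNF formula with `n` variables and
`m` clauses. `var i s k` is `x_{i,k+1}` when `s = true` and `x̄_{i,k+1}` when `s = false`;
`cl j k` is the clause vertex `c_{j,k+1}`. -/
inductive GVert (n m : ℕ) where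
  | var (i : Fin n) (s : Bool) (k : Fin 3)
  | cl (j : Fin m) (k : Fin 3)
deriving DecidableEq

/-- The edges of the gadget graph `G_θ` (up to symmetry). The formula is described by
`pos j` (true iff clause `j` is positive) and `lit j` (its three variables). -/
def gadgetRel {n m : ℕ} (pos : Fin m → Bool) (lit : Fin m → Fin 3 → Fin n)
    (a b : GVert n m) : Prop :=
  -- literal paths x_{i,1}x_{i,2}, x_{i,2}x_{i,3}, x̄_{i,1}x̄_{i,2}, x̄_{i,2}x̄_{i,3}
  (∃ (i : Fin n) (s : Bool),
      (a = GVert.var i s 0 ∧ b = GVert.var i s 1) ∨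
      (a = GVert.var i s 1 ∧ b = GVert.var i s 2)) ∨
  -- cross edges x_{i,1}x̄_{i,1}, x_{i,2}x̄_{i,3}, x_{i,3}x̄_{i,2}, x_{i,3}x̄_{i,3}
  (∃ i : Fin n,
      (a = GVert.var i true 0 ∧ b = GVert.var i false 0) ∨
      (a = GVert.var i true 1 ∧ b = GVert.var i false 2) ∨
      (a = GVert.var i true 2 ∧ b = GVert.var i false 1) ∨
      (a = GVert.var i true 2 ∧ b = GVert.var i false 2)) ∨
  -- clause paths c_{j,1}c_{j,2}, c_{j,2}c_{j,3}
  (∃ j : Fin m,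
      (a = GVert.cl j 0 ∧ b = GVert.cl j 1) ∨
      (a = GVert.cl j 1 ∧ b = GVert.cl j 2)) ∨
  -- clause-literal edges c_{j,3} to the third vertex of each of its literal paths
  (∃ (j : Fin m) (k : Fin 3), a = GVert.cl j 2 ∧ b = GVert.var (lit j k) (pos j) 2)

/-- The gadget graph `G_θ`. -/
def gadgetGraph {n m : ℕ} (pos : Fin m → Bool) (lit : Fin m → Fin 3 → Fin n) :
    SimpleGraph (GVert n m) :=
  SimpleGraph.fromRel (gadgetRel pos lit)

/-- The 2-coloring of `G_θ`: `true` = red, `false` = blue. `x_{i,1}, x̄_{i,1}` and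
`c_{j,1}, c_{j,2}` are red; all other vertices are blue. -/
def gadgetColor {n m : ℕ} : GVert n m → Bool
  | GVert.var _ _ k => k == 0
  | GVert.cl _ k => !(k == 2)


section Aux

open SimpleGraph

lemma selective_of_mem {V α : Type*} (G : SimpleGraph V) (C : V → α) (S : Set V)
    {v : V} (hv : v ∈ S) :
    ∃ u ∈ NearestSet G v (S ∪ {w | C w ≠ C v}), C u = C v :=
  ⟨v, ⟨Or.inl hv, fun w _ => by simp [SimpleGraph.dist_self]⟩, rfl⟩

lemma selective_of_adj {V α : Type*} {G : SimpleGraph V} (hc : G.Connected) {C : V → α}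
    {S : Set V} {v u : V} (hvS : v ∉ S) (hadj : G.Adj v u)
    (huS : u ∈ S ∪ {w | C w ≠ C v}) (hcu : C u = C v) :
    ∃ u ∈ NearestSet G v (S ∪ {w | C w ≠ C v}), C u = C v := by
  refine ⟨u, ⟨huS, fun w hw => ?_⟩, hcu⟩
  have hwv : w ≠ v := by
    rintro rfl
    rcases hw with h | h
    · exact hvS h
    · exact h rfl
  rw [SimpleGraph.dist_eq_one_iff_adj.2 hadj]
  exact hc.pos_dist_of_ne (Ne.symm hwv)

lemma gadget_adj {n m : ℕ} {pos : Fin m → Bool} {lit : Fin m → Fin 3 → Fin n}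
    {a b : GVert n m} (hne : a ≠ b)
    (h : gadgetRel pos lit a b ∨ gadgetRel pos lit b a) :
    (gadgetGraph pos lit).Adj a b := by
  rw [gadgetGraph, SimpleGraph.fromRel_adj]
  exact ⟨hne, h⟩

end Aux

/-- If the monotone 3-CNF formula `θ` is satisfiable, then `G_θ` has a selective subset of
cardinality exactly `2n + m`: for a satisfying assignment `σ`, take `{x_{i,1}, x_{i,3}}`
for each variable assigned true, `{x̄_{i,1}, x̄_{i,3}}` for each variable assigned false,
together with `c_{j,1}` for every clause. -/
theorem stmt_11 {n m : ℕ} (pos : Fin m → Bool) (lit : Fin m → Fin 3 → Fin n)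
    (hdis : ∀ j : Fin m, Function.Injective (lit j))
    (hconn : (gadgetGraph pos lit).Connected)
    (σ : Fin n → Bool) (hσ : ∀ j : Fin m, ∃ k : Fin 3, σ (lit j k) = pos j) :
    IsSelective (gadgetGraph pos lit) gadgetColor
        ({v : GVert n m | (∃ i : Fin n, v = GVert.var i (σ i) 0 ∨ v = GVert.var i (σ i) 2) ∨
          ∃ j : Fin m, v = GVert.cl j 0}) ∧
      ({v : GVert n m | (∃ i : Fin n, v = GVert.var i (σ i) 0 ∨ v = GVert.var i (σ i) 2) ∨
          ∃ j : Fin m, v = GVert.cl j 0}).ncard = 2 * n + m := by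
  set S : Set (GVert n m) :=
    {v : GVert n m | (∃ i : Fin n, v = GVert.var i (σ i) 0 ∨ v = GVert.var i (σ i) 2) ∨
      ∃ j : Fin m, v = GVert.cl j 0} with hSdef
  constructor
  · intro v
    rcases v with ⟨i, s, k⟩ | ⟨j, k⟩
    · fin_cases k
      · -- var i s 0
        by_cases h : s = σ i
        · exact selective_of_mem _ _ _ (Or.inl ⟨i, Or.inl (by subst h; rfl)⟩)
        · have hvS : GVert.var i s 0 ∉ S := by
            rintro (⟨i', h' | h'⟩ | ⟨j, h'⟩) <;> simp_all
          refine selective_of_adj hconn hvS (u := GVert.var i (σ i) 0) ?_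
            (Or.inl (Or.inl ⟨i, Or.inl rfl⟩)) (by simp [gadgetColor])
          cases hs : σ i with
          | true =>
            refine gadget_adj (by simp_all) (Or.inr ?_)
            exact Or.inr (Or.inl ⟨i, Or.inl ⟨by simp_all, by simp_all⟩⟩)
          | false =>
            refine gadget_adj (by simp_all) (Or.inl ?_)
            exact Or.inr (Or.inl ⟨i, Or.inl ⟨by simp_all, by simp_all⟩⟩)
      · -- var i s 1
        have hvS : GVert.var i s 1 ∉ S := by
          rintro (⟨i', h' | h'⟩ | ⟨j, h'⟩) <;> simp_all
        refine selective_of_adj hconn hvS (u := GVert.var i (σ i) 2) ?_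
          (Or.inl (Or.inl ⟨i, Or.inr rfl⟩)) (by simp [gadgetColor])
        by_cases h : s = σ i
        · exact gadget_adj (by simp)
            (Or.inl (Or.inl ⟨i, s, Or.inr ⟨rfl, by rw [h]⟩⟩))
        · cases hs : σ i with
          | true =>
            refine gadget_adj (by simp_all) (Or.inr ?_)
            exact Or.inr (Or.inl ⟨i, Or.inr (Or.inr (Or.inl ⟨by simp_all, by simp_all⟩))⟩)
          | false =>
            refine gadget_adj (by simp_all) (Or.inl ?_)
            exact Or.inr (Or.inl ⟨i, Or.inr (Or.inl ⟨by simp_all, by simp_all⟩)⟩)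
      · -- var i s 2
        by_cases h : s = σ i
        · exact selective_of_mem _ _ _ (Or.inl ⟨i, Or.inr (by subst h; rfl)⟩)
        · have hvS : GVert.var i s 2 ∉ S := by
            rintro (⟨i', h' | h'⟩ | ⟨j, h'⟩) <;> simp_all
          refine selective_of_adj hconn hvS (u := GVert.var i (σ i) 2) ?_
            (Or.inl (Or.inl ⟨i, Or.inr rfl⟩)) (by simp [gadgetColor])
          cases hs : σ i with
          | true =>
            refine gadget_adj (by simp_all) (Or.inr ?_)
            exact Or.inr (Or.inl ⟨i, Or.inr (Or.inr (Or.inr ⟨by simp_all, by simp_all⟩))⟩)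
          | false =>
            refine gadget_adj (by simp_all) (Or.inl ?_)
            exact Or.inr (Or.inl ⟨i, Or.inr (Or.inr (Or.inr ⟨by simp_all, by simp_all⟩))⟩)
    · fin_cases k
      · exact selective_of_mem _ _ _ (Or.inr ⟨j, rfl⟩)
      · -- cl j 1
        have hvS : GVert.cl j 1 ∉ S := by
          rintro (⟨i', h' | h'⟩ | ⟨j', h'⟩) <;> simp_all
        refine selective_of_adj hconn hvS (u := GVert.cl j 0) ?_
          (Or.inl (Or.inr ⟨j, rfl⟩)) (by simp [gadgetColor])
        exact gadget_adj (by simp)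
          (Or.inr (Or.inr (Or.inr (Or.inl ⟨j, Or.inl ⟨rfl, rfl⟩⟩))))
      · -- cl j 2
        have hvS : GVert.cl j 2 ∉ S := by
          rintro (⟨i', h' | h'⟩ | ⟨j', h'⟩) <;> simp_all
        obtain ⟨k, hk⟩ := hσ j
        refine selective_of_adj hconn hvS (u := GVert.var (lit j k) (σ (lit j k)) 2) ?_
          (Or.inl (Or.inl ⟨lit j k, Or.inr rfl⟩)) (by simp [gadgetColor])
        refine gadget_adj (by simp) (Or.inl ?_)
        exact Or.inr (Or.inr (Or.inr ⟨j, k, rfl, by rw [hk]⟩))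
  · -- cardinality
    have hf : Function.Injective (Sum.elim (fun i : Fin n => GVert.var i (σ i) 0)
        (Sum.elim (fun i : Fin n => GVert.var i (σ i) 2)
          (fun j : Fin m => GVert.cl j 0))) := by
      rintro (a | a | a) (b | b | b) h <;> simp_all
    have hS : S = Set.range (Sum.elim (fun i : Fin n => GVert.var i (σ i) 0)
        (Sum.elim (fun i : Fin n => GVert.var i (σ i) 2)
          (fun j : Fin m => GVert.cl j 0))) := by
      ext v
      simp only [hSdef, Set.mem_setOf_eq, Set.mem_range, Sum.exists, Sum.elim_inl,
        Sum.elim_inr]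
      constructor
      · rintro (⟨i, h | h⟩ | ⟨j, h⟩)
        · exact Or.inl ⟨i, h.symm⟩
        · exact Or.inr (Or.inl ⟨i, h.symm⟩)
        · exact Or.inr (Or.inr ⟨j, h.symm⟩)
      · rintro (⟨i, h⟩ | ⟨i, h⟩ | ⟨j, h⟩)
        · exact Or.inl ⟨i, Or.inl h.symm⟩
        · exact Or.inl ⟨i, Or.inr h.symm⟩
        · exact Or.inr ⟨j, h.symm⟩
    rw [hS, ← Nat.card_coe_set_eq, Nat.card_range_of_injective hf]
    simp [Nat.card_sum]
    omega
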